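/- arXiv:math/0312419 — 2 statements merged into one kernel-verified Lean document; each statement's English description precedes it below -/
import Mathlib

section
/- For l > 0 and L > 0, the function u(L;x) = L^{-1} arcsin( (1 - c e^{2L(1-x)}) / (1 + c e^{2L(1-x)}) ), where c = (1-L)/(1+L) and 0 < L < 1, satisfies the ordinary differential equation u'' = L cot(Lu) (u'^2 - 1) on the interval (1, ∞). -/
/-!
With `q x = c * exp (2 * L * (1 - x)) > 0`, the function `s = (1 - q) / (1 + q)` (a translated
`tanh (L * x)`) takes values in `(-1, 1)` and solves the Riccati equation `s' = L * (1 - s ^ 2)`.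
Hence `L * u = arcsin s` satisfies `(L * u)' = L * √(1 - s ^ 2) = L * cos (L * u)`, i.e.
`u' = cos (L * u)`. Differentiating once more, `u'' = -L * sin (L * u) * cos (L * u)`, which is
`L * cot (L * u) * (u' ^ 2 - 1)` because `u' ^ 2 - 1 = -sin (L * u) ^ 2`.
-/

open Real

theorem deriv_deriv_eq_of_hasDerivAt_cos {L : ℝ} {u : ℝ → ℝ}
    (hu : ∀ x, HasDerivAt u (cos (L * u x)) x) (x : ℝ) :
    deriv (deriv u) x = L * (cos (L * u x) / sin (L * u x)) * (deriv u x ^ 2 - 1) := by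
  have hderiv : deriv u = fun y => cos (L * u y) := funext fun y => (hu y).deriv
  rw [hderiv, (((hu x).const_mul L).cos).deriv]
  rcases eq_or_ne (sin (L * u x)) 0 with hsin | hsin
  · -- with `cos / 0 = 0` the right side vanishes, like the left one
    simp [hsin]
  · have hcos_sq : cos (L * u x) ^ 2 - 1 = -sin (L * u x) ^ 2 := by
      linarith [sin_sq_add_cos_sq (L * u x)]
    rw [hcos_sq]
    field_simp

theorem hasDerivAt_one_sub_div_one_add {L : ℝ} {q : ℝ → ℝ} {x : ℝ}
    (hq : HasDerivAt q (-2 * L * q x) x) (hq1 : 1 + q x ≠ 0) :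
    HasDerivAt (fun y => (1 - q y) / (1 + q y))
      (L * (1 - ((1 - q x) / (1 + q x)) ^ 2)) x := by
  refine (hq.const_sub 1 |>.div (hq.const_add 1) hq1).congr_deriv ?_
  field_simp
  ring

theorem one_sub_div_one_add_mem_Ioo {q : ℝ} (hq : 0 < q) :
    (1 - q) / (1 + q) ∈ Set.Ioo (-1) 1 := by
  constructor
  · rw [lt_div_iff₀ (by linarith)]; linarith
  · rw [div_lt_one (by linarith)]; linarith

theorem hasDerivAt_arcsin_of_hasDerivAt_eq_mul_one_sub_sq {L : ℝ} {s : ℝ → ℝ} {x : ℝ}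
    (hs : HasDerivAt s (L * (1 - s x ^ 2)) x) (hsx : s x ∈ Set.Ioo (-1) 1) :
    HasDerivAt (fun y => arcsin (s y)) (L * cos (arcsin (s x))) x := by
  refine ((hasDerivAt_arcsin hsx.1.ne' hsx.2.ne).comp x hs).congr_deriv ?_
  rw [cos_arcsin, one_div_mul_eq_div, mul_div_assoc, div_sqrt]

theorem hasDerivAt_const_mul_exp_two_mul_one_sub (c L x : ℝ) :
    HasDerivAt (fun y => c * exp (2 * L * (1 - y))) (-2 * L * (c * exp (2 * L * (1 - x)))) x := by
  refine ((((hasDerivAt_id x).const_sub 1).const_mul (2 * L)).exp.const_mul c).congr_deriv ?_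
  simp only [id]
  ring

theorem noded_solution_satisfies_ode (L : ℝ) (hL : 0 < L) (hL1 : L < 1)
    (c : ℝ) (hc : c = (1 - L) / (1 + L))
    (u : ℝ → ℝ)
    (hu : u = fun x : ℝ =>
      L⁻¹ * arcsin ((1 - c * exp (2 * L * (1 - x))) / (1 + c * exp (2 * L * (1 - x))))) :
    ∀ x ∈ Set.Ioi (1 : ℝ),
      deriv (deriv u) x
        = L * (cos (L * u x) / sin (L * u x)) * ((deriv u x) ^ 2 - 1) := by
  have hc0 : 0 < c := hc ▸ div_pos (by linarith) (by linarith)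
  have hu' : ∀ y, HasDerivAt u (cos (L * u y)) y := by
    intro y
    have hq : 0 < c * exp (2 * L * (1 - y)) := by positivity
    have hs := hasDerivAt_one_sub_div_one_add (hasDerivAt_const_mul_exp_two_mul_one_sub c L y)
      (by positivity)
    have harcsin := (hasDerivAt_arcsin_of_hasDerivAt_eq_mul_one_sub_sq hs
      (one_sub_div_one_add_mem_Ioo hq)).const_mul L⁻¹
    subst hu
    refine harcsin.congr_deriv ?_
    beta_reduce
    rw [mul_inv_cancel_left₀ hL.ne', inv_mul_cancel_left₀ hL.ne']
  exact fun x _ => deriv_deriv_eq_of_hasDerivAt_cos hu' x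
end

section
/- Let 0 < l < 1, a(l) = l^{-1} arcsin(l), b(l) = π l^{-1} - a(l), and suppose |B_3| ≤ C_0 l and |B_4| ≤ C_0 l. Then there exist constants C, l_0 > 0 such that for all 0 < l < l_0: ∫_{a(l)}^{b(l)} (B_3 cot(lx) + B_4 (1 - lx cot(lx))) · l^{-2} sin^2(lx) dx ≤ C l^{-2}. -/
/-!
Multiplying by `sin² t` removes the poles of `cot t`: the integrand equals
`l⁻² (B₃ sin t cos t + B₄ (sin² t - t sin t cos t))` with `t = l x ∈ [0, π]`, hence is bounded by
`l⁻² (|B₃| + (1 + π)|B₄|) = O(l⁻¹)`. The interval `[a(l), b(l)]` has length at most `π / l`, which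
gives `O(l⁻²)`.
-/

open Real MeasureTheory intervalIntegral Set

lemma cot_combination_mul_sin_sq (B3 B4 t : ℝ) :
    (B3 * (cos t / sin t) + B4 * (1 - t * (cos t / sin t))) * sin t ^ 2
      = B3 * (cos t * sin t) + B4 * (sin t ^ 2 - t * (cos t * sin t)) := by
  rcases eq_or_ne (sin t) 0 with h | h
  · simp [h]
  · field_simp

lemma abs_cot_combination_mul_sin_sq_le (B3 B4 t : ℝ) :
    |(B3 * (cos t / sin t) + B4 * (1 - t * (cos t / sin t))) * sin t ^ 2|
      ≤ |B3| + (1 + |t|) * |B4| := by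
  have hcs : |cos t * sin t| ≤ 1 := by
    rw [abs_mul]
    exact mul_le_one₀ (abs_cos_le_one t) (abs_nonneg _) (abs_sin_le_one t)
  have hs2 : |sin t ^ 2| ≤ 1 := by
    rw [abs_pow]
    exact pow_le_one₀ (abs_nonneg _) (abs_sin_le_one t)
  have hrest : |sin t ^ 2 - t * (cos t * sin t)| ≤ 1 + |t| :=
    calc |sin t ^ 2 - t * (cos t * sin t)|
        ≤ |sin t ^ 2| + |t| * |cos t * sin t| := by rw [← abs_mul]; exact abs_sub _ _
      _ ≤ 1 + |t| * 1 := by gcongr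
      _ = 1 + |t| := by ring
  rw [cot_combination_mul_sin_sq]
  calc |B3 * (cos t * sin t) + B4 * (sin t ^ 2 - t * (cos t * sin t))|
      ≤ |B3| * |cos t * sin t| + |B4| * |sin t ^ 2 - t * (cos t * sin t)| := by
        rw [← abs_mul, ← abs_mul]; exact abs_add_le _ _
    _ ≤ |B3| * 1 + |B4| * (1 + |t|) := by gcongr
    _ = |B3| + (1 + |t|) * |B4| := by ring

lemma inv_mul_arcsin_le_pi_mul_inv_sub {l : ℝ} (hl : 0 < l) :
    l⁻¹ * arcsin l ≤ π * l⁻¹ - l⁻¹ * arcsin l := by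
  have := mul_le_mul_of_nonneg_left (arcsin_le_pi_div_two l) (inv_pos.2 hl).le
  linarith

lemma abs_mul_le_pi_of_mem_window {l x : ℝ} (hl : 0 < l)
    (hx : x ∈ Icc (l⁻¹ * arcsin l) (π * l⁻¹ - l⁻¹ * arcsin l)) : |l * x| ≤ π := by
  have hlx : l * (l⁻¹ * arcsin l) ≤ l * x ∧ l * x ≤ l * (π * l⁻¹ - l⁻¹ * arcsin l) :=
    ⟨mul_le_mul_of_nonneg_left hx.1 hl.le, mul_le_mul_of_nonneg_left hx.2 hl.le⟩
  rw [mul_sub, mul_inv_cancel_left₀ hl.ne', mul_comm π, mul_inv_cancel_left₀ hl.ne'] at hlx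
  rw [abs_of_nonneg (by linarith [arcsin_nonneg.2 hl.le])]
  linarith [arcsin_nonneg.2 hl.le]

lemma window_length_le {l : ℝ} (hl : 0 < l) :
    (π * l⁻¹ - l⁻¹ * arcsin l) - l⁻¹ * arcsin l ≤ π * l⁻¹ := by
  have := mul_nonneg (inv_pos.2 hl).le (arcsin_nonneg.2 hl.le)
  linarith

theorem Y_contribution (C0 : ℝ) (hC0 : 0 < C0) :
    ∃ C > (0 : ℝ), ∃ l0 > (0 : ℝ), ∀ l B3 B4 : ℝ, 0 < l → l < l0 →
      |B3| ≤ C0 * l → |B4| ≤ C0 * l →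
      (∫ x in (l⁻¹ * arcsin l)..(π * l⁻¹ - l⁻¹ * arcsin l),
          (B3 * (cos (l * x) / sin (l * x))
            + B4 * (1 - l * x * (cos (l * x) / sin (l * x)))) * (l⁻¹ ^ 2 * sin (l * x) ^ 2))
        ≤ C * l⁻¹ ^ 2 := by
  refine ⟨C0 * (2 + π) * π, by positivity, 1, one_pos, fun l B3 B4 hl _ hB3 hB4 => ?_⟩
  have hab := inv_mul_arcsin_le_pi_mul_inv_sub hl
  have hbound : ∀ x ∈ uIoc (l⁻¹ * arcsin l) (π * l⁻¹ - l⁻¹ * arcsin l),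
      ‖(B3 * (cos (l * x) / sin (l * x)) + B4 * (1 - l * x * (cos (l * x) / sin (l * x))))
        * (l⁻¹ ^ 2 * sin (l * x) ^ 2)‖ ≤ C0 * (2 + π) * l⁻¹ := by
    intro x hx
    have hlx := abs_mul_le_pi_of_mem_window hl (Ioc_subset_Icc_self (uIoc_of_le hab ▸ hx))
    rw [mul_left_comm, norm_mul, norm_pow, norm_inv, Real.norm_of_nonneg hl.le, Real.norm_eq_abs]
    calc l⁻¹ ^ 2 * |(B3 * (cos (l * x) / sin (l * x))
            + B4 * (1 - l * x * (cos (l * x) / sin (l * x)))) * sin (l * x) ^ 2|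
        ≤ l⁻¹ ^ 2 * (C0 * l + (1 + π) * (C0 * l)) := by
          gcongr
          exact (abs_cot_combination_mul_sin_sq_le B3 B4 (l * x)).trans (by gcongr)
      _ = C0 * (2 + π) * l⁻¹ := by field_simp; ring
  refine (le_norm_self _).trans ((norm_integral_le_of_norm_le_const hbound).trans ?_)
  calc C0 * (2 + π) * l⁻¹ * |(π * l⁻¹ - l⁻¹ * arcsin l) - l⁻¹ * arcsin l|
      ≤ C0 * (2 + π) * l⁻¹ * (π * l⁻¹) := by
        rw [abs_of_nonneg (sub_nonneg.2 hab)]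
        gcongr
        exact window_length_le hl
    _ = C0 * (2 + π) * π * l⁻¹ ^ 2 := by ring
end
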